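/- arXiv:1806.10489 — 3 statements merged into one kernel-verified Lean document; each statement's English description precedes it below -/
import Mathlib

section
/- Let g be a nilpotent real Lie algebra of dimension 2n+1 admitting a contact form, i.e. an element Θ ∈ g* with Θ ∧ (δΘ)^n ≠ 0. Then the center Z(g) of g has dimension exactly one. -/
noncomputable section

/-- The wedge product of two scalar-valued alternating forms. -/
def wedge {R M : Type*} [CommRing R] [AddCommGroup M] [Module R M] {m n : ℕ}
    (α : M [⋀^Fin m]→ₗ[R] R) (β : M [⋀^Fin n]→ₗ[R] R) : M [⋀^Fin (m + n)]→ₗ[R] R :=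
  (LinearMap.mul' R R).compAlternatingMap ((α.domCoprod β).domDomCongr finSumFinEquiv)

/-- Reindexing of an alternating form along an equality of degrees. -/
def castForm {R M : Type*} [CommRing R] [AddCommGroup M] [Module R M] {m n : ℕ}
    (h : m = n) (α : M [⋀^Fin m]→ₗ[R] R) : M [⋀^Fin n]→ₗ[R] R :=
  α.domDomCongr (finCongr h)

/-- A linear functional, viewed as a `1`-form. -/
def oneForm {R M : Type*} [CommRing R] [AddCommGroup M] [Module R M]
    (f : M →ₗ[R] R) : M [⋀^Fin 1]→ₗ[R] R :=
  AlternatingMap.ofSubsingleton R M R 0 f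


/-- The `k`-th wedge power of a `2`-form. -/
def wpow {R M : Type*} [CommRing R] [AddCommGroup M] [Module R M]
    (β : M [⋀^Fin 2]→ₗ[R] R) : (k : ℕ) → M [⋀^Fin (2 * k)]→ₗ[R] R
  | 0 => castForm (by ring) (AlternatingMap.constOfIsEmpty R M (Fin 0) 1)
  | (k + 1) => castForm (by ring) (wedge β (wpow β k))

/-!
If `z` is central and `Θ z = 0`, then `z` is annihilated by `Θ` and by `δΘ`
(since `δΘ (z, x) = -Θ ⁅z, x⁆ = 0`), hence by the top-degree form `Θ ∧ (δΘ)ⁿ`. A nonzero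
top-degree form annihilates no nonzero vector: expanding `z` in a basis `v` on which the form is
nonzero, replacing `v j` by `z` multiplies the value by the `j`-th coordinate of `z`. So `Θ` is
injective on the center, which therefore has dimension at most one; it is nonzero because `g` is
nilpotent and nontrivial.
-/

namespace AlternatingMap

section VanishesAt

variable {R M N ι : Type*} [CommRing R] [AddCommGroup M] [Module R M]
  [AddCommGroup N] [Module R N]

/-- For `ι = Fin (k + 1)` this says that the interior product `ι_z α` vanishes. -/
def VanishesAt (α : M [⋀^ι]→ₗ[R] N) (z : M) : Prop :=
  ∀ v : ι → M, z ∈ Set.range v → α v = 0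

variable {z : M}

theorem VanishesAt.domDomCongr {ι' : Type*} {α : M [⋀^ι]→ₗ[R] N} (h : α.VanishesAt z)
    (e : ι ≃ ι') : (α.domDomCongr e).VanishesAt z := by
  rintro v ⟨i, rfl⟩
  exact h _ ⟨e.symm i, by simp⟩

theorem VanishesAt.compLinearMap {N' : Type*} [AddCommGroup N'] [Module R N']
    {α : M [⋀^ι]→ₗ[R] N} (h : α.VanishesAt z) (f : N →ₗ[R] N') :
    (f.compAlternatingMap α).VanishesAt z := fun v hv => by
  simp [h v hv]

theorem VanishesAt.domCoprod {ιa ιb N₁ N₂ : Type*} [Fintype ιa] [Fintype ιb]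
    [DecidableEq ιa] [DecidableEq ιb] [AddCommGroup N₁] [Module R N₁]
    [AddCommGroup N₂] [Module R N₂]
    {a : M [⋀^ιa]→ₗ[R] N₁} {b : M [⋀^ιb]→ₗ[R] N₂} (ha : a.VanishesAt z) (hb : b.VanishesAt z) :
    (a.domCoprod b).VanishesAt z := by
  rintro v ⟨j, rfl⟩
  rw [← coe_multilinearMap, domCoprod_coe, _root_.sum_apply]
  refine Finset.sum_eq_zero fun σ _ => ?_
  induction σ using Quotient.inductionOn' with
  | h σ =>
    rw [domCoprod.summand_mk'']
    simp only [_root_.smul_apply, MultilinearMap.domDomCongr_apply,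
      MultilinearMap.domCoprod_apply, coe_multilinearMap]
    rcases hσ : σ.symm j with i | i
    · rw [ha _ ⟨i, by simp [← hσ]⟩, TensorProduct.zero_tmul, smul_zero]
    · rw [hb _ ⟨i, by simp [← hσ]⟩, TensorProduct.tmul_zero, smul_zero]

theorem VanishesAt.wedge {m n : ℕ} {α : M [⋀^Fin m]→ₗ[R] R} {β : M [⋀^Fin n]→ₗ[R] R}
    (hα : α.VanishesAt z) (hβ : β.VanishesAt z) : (_root_.wedge α β).VanishesAt z :=
  ((hα.domCoprod hβ).domDomCongr finSumFinEquiv).compLinearMap _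

theorem VanishesAt.wpow {β : M [⋀^Fin 2]→ₗ[R] R} (hβ : β.VanishesAt z) :
    ∀ k, (_root_.wpow β k).VanishesAt z
  | 0 => by
    rintro v ⟨i, -⟩
    exact i.elim0
  | k + 1 => (hβ.wedge (hβ.wpow k)).domDomCongr _

theorem vanishesAt_oneForm {f : M →ₗ[R] R} (hf : f z = 0) : (oneForm f).VanishesAt z := by
  rintro v ⟨i, rfl⟩
  fin_cases i
  exact hf

end VanishesAt

theorem map_update_basis {R M N ι : Type*} [Semiring R] [AddCommMonoid M] [Module R M]
    [AddCommMonoid N] [Module R N] [Fintype ι] [DecidableEq ι]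
    (α : M [⋀^ι]→ₗ[R] N) (b : Module.Basis ι R M) (j : ι) (z : M) :
    α (Function.update b j z) = b.repr z j • α b := by
  conv_lhs => rw [← b.sum_repr z, α.map_update_sum]
  rw [Finset.sum_eq_single j, map_update_smul, Function.update_eq_self]
  · intro i _ hij
    rw [map_update_smul, α.map_eq_zero_of_eq _ (by simp [hij]) hij, smul_zero]
  · simp

theorem VanishesAt.eq_zero {K M N ι : Type*} [Field K] [AddCommGroup M] [Module K M]
    [FiniteDimensional K M] [AddCommGroup N] [Module K N] [Fintype ι]
    (hι : Fintype.card ι = Module.finrank K M) {α : M [⋀^ι]→ₗ[K] N} (hα : α ≠ 0) {z : M}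
    (h : α.VanishesAt z) : z = 0 := by
  classical
  obtain ⟨v, hv⟩ := DFunLike.ne_iff.mp hα
  have hli : LinearIndependent K v := not_imp_comm.mp (α.map_linearDependent v) hv
  let b := basisOfLinearIndependentOfCardEqFinrank' v hli hι
  have hb : ⇑b = v := coe_basisOfLinearIndependentOfCardEqFinrank' v hli hι
  suffices b.repr z = 0 from b.repr.map_eq_zero_iff.mp this
  ext j
  have := α.map_update_basis b j z
  rw [h _ ⟨j, by simp⟩, hb, eq_comm, smul_eq_zero] at this
  exact this.resolve_right hv

end AlternatingMap

theorem vanishesAt_of_mem_center {R L N : Type*} [CommRing R] [LieRing L] [LieAlgebra R L]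
    [AddCommGroup N] [Module R N] {β : L [⋀^Fin 2]→ₗ[R] N} {f : L →ₗ[R] N}
    (hβ : ∀ x y, β ![x, y] = -f ⁅x, y⁆) {z : L} (hz : z ∈ LieAlgebra.center R L) :
    β.VanishesAt z := by
  have hzx : ∀ x : L, ⁅z, x⁆ = 0 := fun x => by
    rw [← lie_skew, (LieModule.mem_maxTrivSubmodule R L L z).mp hz x, neg_zero]
  rintro v ⟨i, rfl⟩
  rw [show v = ![v 0, v 1] from by ext j; fin_cases j <;> rfl, hβ, neg_eq_zero]
  match i with
  | 0 => rw [hzx, map_zero]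
  | 1 => rw [← lie_skew, hzx, neg_zero, map_zero]

theorem Submodule.finrank_le_one_of_disjoint_ker {K M : Type*} [Field K] [AddCommGroup M]
    [Module K M] {S : Submodule K M} {f : Module.Dual K M} (h : Disjoint S (LinearMap.ker f)) :
    Module.finrank K S ≤ 1 :=
  (LinearMap.finrank_le_finrank_of_injective
    (LinearMap.injective_domRestrict_iff.mpr h)).trans_eq (Module.finrank_self K)

/-- Let `g` be a nilpotent real Lie algebra of dimension `2n+1` admitting a
contact form, i.e. an element `Θ ∈ g*` with `Θ ∧ (δΘ)^n ≠ 0`, where `δ` is the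
Chevalley–Eilenberg differential, determined on `1`-forms by `(δα)(x,y) = −α([x,y])`.
Then the center of `g` has dimension exactly one. -/
theorem center_dim_one_of_contact (n : ℕ) (g : Type*) [LieRing g] [LieAlgebra ℝ g]
    [Module.Finite ℝ g] [LieRing.IsNilpotent g]
    (hdim : Module.finrank ℝ g = 2 * n + 1)
    (δ : Module.Dual ℝ g → (g [⋀^Fin 2]→ₗ[ℝ] ℝ))
    (hδ : ∀ (α : Module.Dual ℝ g) (x y : g), δ α ![x, y] = -α ⁅x, y⁆)
    (Θ : Module.Dual ℝ g)
    (hΘ : wedge (oneForm Θ) (wpow (δ Θ) n) ≠ 0) :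
    Module.finrank ℝ ↥(LieAlgebra.center ℝ g) = 1 := by
  have hcard : Fintype.card (Fin (1 + 2 * n)) = Module.finrank ℝ g := by
    rw [Fintype.card_fin, hdim, add_comm]
  have hle : Module.finrank ℝ (LieAlgebra.center ℝ g) ≤ 1 := by
    refine Submodule.finrank_le_one_of_disjoint_ker (f := Θ) (Submodule.disjoint_def.mpr ?_)
    intro z hz hΘz
    have hδΘ := (vanishesAt_of_mem_center (hδ Θ) hz).wpow n
    exact ((AlternatingMap.vanishesAt_oneForm hΘz).wedge hδΘ).eq_zero hcard hΘ
  have : Nontrivial g := Module.nontrivial_of_finrank_pos (R := ℝ) (by omega)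
  have : Nontrivial (LieAlgebra.center ℝ g) := LieAlgebra.non_trivial_center_of_isNilpotent
  have := Module.finrank_pos (R := ℝ) (M := LieAlgebra.center ℝ g)
  omega

end
end

section
/- For the five-dimensional nilpotent real Lie algebra L_{5,7} with nonzero brackets [e1,e2]=e3, [e1,e3]=e4, [e1,e4]=e5, every α ∈ g* satisfies α ∧ δα ∧ δα = 0 in Λ^5 g*; consequently L_{5,7} admits no contact form. -/
set_option linter.unnecessarySeqFocus false

noncomputable section

/-- The underlying vector space of the 5-dimensional nilpotent Lie algebra `L57`. -/
def L57 : Type := Fin 5 → ℝ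

instance : AddCommGroup L57 := inferInstanceAs (AddCommGroup (Fin 5 → ℝ))
instance : Module ℝ L57 := inferInstanceAs (Module ℝ (Fin 5 → ℝ))

theorem L57.add_apply (x y : L57) (i : Fin 5) : (x + y) i = x i + y i := rfl
theorem L57.smul_apply (t : ℝ) (x : L57) (i : Fin 5) : (t • x) i = t * x i := rfl

/-- The bracket of `L57`: `[e1,e2] = e3`, `[e1,e3] = e4`, `[e1,e4] = e5`. -/
def L57.b (x y : Fin 5 → ℝ) : Fin 5 → ℝ := ![0, 0, x 0 * y 1 - x 1 * y 0, x 0 * y 2 - x 2 * y 0, x 0 * y 3 - x 3 * y 0]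

instance : LieRing L57 where
  bracket x y := L57.b x y
  add_lie x y z := by
    show L57.b (x + y) z = L57.b x z + L57.b y z
    funext i; fin_cases i <;> simp [L57.b, L57.add_apply] <;> ring
  lie_add x y z := by
    show L57.b x (y + z) = L57.b x y + L57.b x z
    funext i; fin_cases i <;> simp [L57.b, L57.add_apply] <;> ring
  lie_self x := by
    show L57.b x x = 0
    funext i; fin_cases i <;> simp [L57.b] <;> ring
  leibniz_lie x y z := by
    show L57.b x (L57.b y z) = L57.b (L57.b x y) z + L57.b y (L57.b x z)
    funext i; fin_cases i <;> simp [L57.b, L57.add_apply] <;> ring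

instance : LieAlgebra ℝ L57 where
  lie_smul t x y := by
    show L57.b x (t • y) = t • L57.b x y
    funext i; fin_cases i <;> simp [L57.b, L57.smul_apply] <;> ring

/-- The standard basis `e1, …, e5` of `L57` (indexed by `0, …, 4`). -/
def L57.e (i : Fin 5) : L57 := (Pi.single i 1 : Fin 5 → ℝ)

/-- The dual basis `e^1, …, e^5` of `L57` (indexed by `0, …, 4`). -/
def L57.eps (i : Fin 5) : Module.Dual ℝ L57 where
  toFun x := x i
  map_add' _ _ := rfl
  map_smul' _ _ := rfl

/-! Every bracket of `L_{5,7}` involves `e1`, so `δα` vanishes on the hyperplane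
`ker e^1 = span(e2, …, e5)`. Two forms vanishing on a common hyperplane have zero wedge product:
among distinct basis vectors at most one lies off the hyperplane, so in each term of the shuffle
sum one of the two factors is evaluated inside it. Hence `δα ∧ δα = 0`, and so is
`α ∧ δα ∧ δα`. -/

section Wedge

variable {R M : Type*} [CommRing R] [AddCommGroup M] [Module R M] {m n : ℕ}

theorem wedge_apply (α : M [⋀^Fin m]→ₗ[R] R) (β : M [⋀^Fin n]→ₗ[R] R) (v : Fin (m + n) → M) :
    wedge α β v = ∑ σ : Equiv.Perm.ModSumCongr (Fin m) (Fin n),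
      LinearMap.mul' R R (AlternatingMap.domCoprod.summand α β σ (v ∘ finSumFinEquiv)) := by
  simp [wedge, AlternatingMap.domCoprod_apply]

theorem wedge_apply_eq_zero_of_forall_perm (α : M [⋀^Fin m]→ₗ[R] R) (β : M [⋀^Fin n]→ₗ[R] R)
    (v : Fin (m + n) → M)
    (h : ∀ σ : Equiv.Perm (Fin m ⊕ Fin n),
      α (fun i => v (finSumFinEquiv (σ (.inl i)))) = 0 ∨
        β (fun i => v (finSumFinEquiv (σ (.inr i)))) = 0) :
    wedge α β v = 0 := by
  rw [wedge_apply]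
  refine Finset.sum_eq_zero fun σ _ => ?_
  induction σ using Quotient.inductionOn' with
  | h σ =>
    rw [AlternatingMap.domCoprod.summand_mk'']
    rcases h σ with h | h <;>
      simp [MultilinearMap.domCoprod_apply, h]

theorem wedge_zero_right (α : M [⋀^Fin m]→ₗ[R] R) :
    wedge α (0 : M [⋀^Fin n]→ₗ[R] R) = 0 := by
  ext v
  rw [wedge_apply_eq_zero_of_forall_perm _ _ _ fun _ => .inr rfl, AlternatingMap.zero_apply]

theorem wedge_eq_zero_of_vanish_off_basis_vector {ι : Type*} (b : Module.Basis ι R M) (i₀ : ι)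
    {α : M [⋀^Fin m]→ₗ[R] R} {β : M [⋀^Fin n]→ₗ[R] R}
    (hα : ∀ v : Fin m → ι, (∀ j, v j ≠ i₀) → α (b ∘ v) = 0)
    (hβ : ∀ v : Fin n → ι, (∀ j, v j ≠ i₀) → β (b ∘ v) = 0) :
    wedge α β = 0 := by
  refine b.ext_alternating fun v hv => ?_
  rw [AlternatingMap.zero_apply]
  refine wedge_apply_eq_zero_of_forall_perm _ _ _ fun σ => ?_
  by_contra! hne
  obtain ⟨j, hj⟩ : ∃ j, v (finSumFinEquiv (σ (.inl j))) = i₀ := by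
    by_contra! h
    exact hne.1 (hα _ h)
  obtain ⟨k, hk⟩ : ∃ k, v (finSumFinEquiv (σ (.inr k))) = i₀ := by
    by_contra! h
    exact hne.2 (hβ _ h)
  exact Sum.inl_ne_inr (σ.injective (finSumFinEquiv.injective (hv (hj.trans hk.symm))))

end Wedge

namespace L57

def basis : Module.Basis (Fin 5) ℝ L57 := Pi.basisFun ℝ (Fin 5)

theorem basis_apply_zero {i : Fin 5} (hi : i ≠ 0) : basis i 0 = 0 := by
  show (Pi.basisFun ℝ (Fin 5) i : Fin 5 → ℝ) 0 = 0
  simp [hi.symm]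

theorem lie_eq_zero_of_apply_zero {x y : L57} (hx : x 0 = 0) (hy : y 0 = 0) : ⁅x, y⁆ = 0 := by
  show L57.b x y = 0
  funext i
  fin_cases i <;> simp [L57.b, hx, hy]

theorem delta_basis_eq_zero (δ : Module.Dual ℝ L57 → (L57 [⋀^Fin 2]→ₗ[ℝ] ℝ))
    (hδ : ∀ (α : Module.Dual ℝ L57) (x y : L57), δ α ![x, y] = -α ⁅x, y⁆)
    (α : Module.Dual ℝ L57) (v : Fin 2 → Fin 5) (hv : ∀ j, v j ≠ 0) :
    δ α (basis ∘ v) = 0 := by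
  have hpair : basis ∘ v = ![basis (v 0), basis (v 1)] := by
    funext j
    fin_cases j <;> rfl
  rw [hpair, hδ, lie_eq_zero_of_apply_zero (basis_apply_zero (hv 0)) (basis_apply_zero (hv 1)),
    map_zero, neg_zero]

theorem wedge_delta_self (δ : Module.Dual ℝ L57 → (L57 [⋀^Fin 2]→ₗ[ℝ] ℝ))
    (hδ : ∀ (α : Module.Dual ℝ L57) (x y : L57), δ α ![x, y] = -α ⁅x, y⁆)
    (α : Module.Dual ℝ L57) : wedge (δ α) (δ α) = 0 :=
  wedge_eq_zero_of_vanish_off_basis_vector basis 0 (delta_basis_eq_zero δ hδ α)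
    (delta_basis_eq_zero δ hδ α)

end L57

/-- For the five-dimensional nilpotent real Lie algebra `L_{5,7}` with
nonzero brackets `[e1,e2]=e3`, `[e1,e3]=e4`, `[e1,e4]=e5`, every `α ∈ g*` satisfies
`α ∧ δα ∧ δα = 0` in `Λ^5 g*`; consequently `L_{5,7}` admits no contact form. Here `δ` is
the Chevalley–Eilenberg differential, determined on `1`-forms by `(δα)(x,y) = −α([x,y])`. -/
theorem L57_no_contact
    (δ : Module.Dual ℝ L57 → (L57 [⋀^Fin 2]→ₗ[ℝ] ℝ))
    (hδ : ∀ (α : Module.Dual ℝ L57) (x y : L57), δ α ![x, y] = -α ⁅x, y⁆) :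
    (∀ α : Module.Dual ℝ L57, wedge (oneForm α) (wedge (δ α) (δ α)) = 0) ∧
    ¬ ∃ Θ : Module.Dual ℝ L57, wedge (oneForm Θ) (wedge (δ Θ) (δ Θ)) ≠ 0 := by
  have hvanish : ∀ α : Module.Dual ℝ L57, wedge (oneForm α) (wedge (δ α) (δ α)) = 0 := fun α => by
    rw [L57.wedge_delta_self δ hδ α, wedge_zero_right]
  exact ⟨hvanish, fun ⟨Θ, hΘ⟩ => hΘ (hvanish Θ)⟩

end
end

section
/- Let g be a finite-dimensional real Lie algebra, H ∈ Λ³g_R* a real D-closed 3-form, and L an H-generalized contact structure on g. Then L^{−ι_1 H} := {(X, ψ − ι_X ι_1 H) : (X,ψ) ∈ L} is a generalized contact structure on g (i.e. an H'-generalized contact structure with H' = 0). In particular, every H-generalized contact structure on g is a 2-form transform of an untwisted generalized contact structure. -/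
set_option linter.unnecessarySeqFocus false

open scoped TensorProduct

noncomputable section

/-- The argument tuple `([x_i,x_j], x_0, …, x̂_i, …, x̂_j, …, x_m)` appearing in the Koszul
formula for the Chevalley–Eilenberg differential (only relevant when `i < j`). -/
def kosArg {W : Type*} [LieRing W] {m : ℕ} (v : Fin (m + 1) → W) (i j : Fin (m + 1)) :
    Fin m → W := fun k =>
  if hk : (k : ℕ) = 0 then ⁅v i, v j⁆
  else
    v ⟨if (k : ℕ) - 1 < (i : ℕ) then (k : ℕ) - 1
       else if (k : ℕ) < (j : ℕ) then (k : ℕ) else (k : ℕ) + 1,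
      by have := k.isLt; have := i.isLt; have := j.isLt; split_ifs <;> omega⟩

/-- `d` is (the degree `m` part of) the Chevalley–Eilenberg differential of `W` with trivial
coefficients, characterized by the Koszul formula
`(δα)(x_0,…,x_m) = Σ_{i<j} (−1)^{i+j} α([x_i,x_j],x_0,…,x̂_i,…,x̂_j,…,x_m)`. -/
def IsCEDiff {R W : Type*} [CommRing R] [LieRing W] [LieAlgebra R W]
    {m : ℕ} (d : (W [⋀^Fin m]→ₗ[R] R) → (W [⋀^Fin (m + 1)]→ₗ[R] R)) : Prop :=
  ∀ (α : W [⋀^Fin m]→ₗ[R] R) (v : Fin (m + 1) → W),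
    d α v = ∑ p ∈ Finset.univ.filter (fun p : Fin (m + 1) × Fin (m + 1) => p.1 < p.2),
      ((-1 : R) ^ ((p.1 : ℕ) + (p.2 : ℕ))) • α (kosArg v p.1 p.2)


section Complexification

variable (V : Type*) [AddCommGroup V] [Module ℝ V]

/-- Complex conjugation on the complexification `ℂ ⊗[ℝ] V`, as a `conj`-semilinear map. -/
def cxConj : (ℂ ⊗[ℝ] V) →ₛₗ[starRingEnd ℂ] (ℂ ⊗[ℝ] V) where
  toFun := (LinearMap.rTensor V Complex.conjAe.toLinearMap)
  map_add' x y := map_add _ x y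
  map_smul' c x := by
    induction x using TensorProduct.induction_on with
    | zero => simp
    | tmul a v => simp [TensorProduct.smul_tmul', smul_eq_mul, map_mul]
    | add x y hx hy =>
        simp only [smul_add, map_add]
        exact congrArg₂ (· + ·) hx hy

instance : RingHomSurjective (starRingEnd ℂ) :=
  ⟨fun c => ⟨(starRingEnd ℂ) c, by simp⟩⟩

/-- The complexification `S_ℂ ⊆ V_ℂ` of a real subspace `S ⊆ V`. -/
def cxSpan (S : Submodule ℝ V) : Submodule ℂ (ℂ ⊗[ℝ] V) :=
  Submodule.span ℂ ((fun v => (1 : ℂ) ⊗ₜ[ℝ] v) '' (S : Set V))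

end Complexification


section TrivialExtension

variable {R : Type*} [CommRing R] {L : Type*} [LieRing L]

/-- The Lie bracket `[(ξ,r),(η,k)] = ([ξ,η],0)` on the abelian extension `L ⊕ R`. -/
instance instLieRingTrivExt : LieRing (L × R) where
  bracket x y := (⁅x.1, y.1⁆, 0)
  add_lie x y z := by ext <;> simp [add_lie]
  lie_add x y z := by ext <;> simp [lie_add]
  lie_self x := by ext <;> simp
  leibniz_lie x y z := by ext <;> simp

instance instLieAlgebraTrivExt [LieAlgebra R L] : LieAlgebra R (L × R) where
  lie_smul t x y := by
    show ((⁅x.1, (t • y).1⁆ : L), (0 : R)) = t • (⁅x.1, y.1⁆, (0 : R))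
    ext <;> simp

end TrivialExtension


section GeneralizedContact

variable (g : Type*) [LieRing g] [LieAlgebra ℝ g]

/-- The complexification `(g_ℝ)_ℂ = (ℂ ⊗ g) ⊕ ℂ` of `g_ℝ = g ⊕ ℝ`,
a complex Lie algebra with bracket `[(ξ,c),(η,d)] = ([ξ,η],0)`. -/
abbrev gC : Type _ := (ℂ ⊗[ℝ] g) × ℂ

/-- The canonical inclusion `g_ℝ → (g_ℝ)_ℂ`. -/
def incC (p : g × ℝ) : gC g := ((1 : ℂ) ⊗ₜ[ℝ] p.1, (p.2 : ℂ))

/-- `1* ∈ g_ℝ*`: the projection onto the `ℝ`-summand. -/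
def oneStarR : Module.Dual ℝ (g × ℝ) := LinearMap.snd ℝ g ℝ

/-- The `ℂ`-bilinear extension of `1*` to `(g_ℝ)_ℂ`. -/
def oneStarC : Module.Dual ℂ (gC g) := LinearMap.snd ℂ (ℂ ⊗[ℝ] g) ℂ

variable {g}

/-- The operator `D = δ + u ∧ ·` in degree `m` (for `u = 1*`). -/
def Dform {R M : Type*} [CommRing R] [AddCommGroup M] [Module R M] (u : M →ₗ[R] R) {m : ℕ}
    (d : (M [⋀^Fin m]→ₗ[R] R) → (M [⋀^Fin (m + 1)]→ₗ[R] R)) (α : M [⋀^Fin m]→ₗ[R] R) :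
    M [⋀^Fin (m + 1)]→ₗ[R] R :=
  d α + castForm (Nat.add_comm 1 m) (wedge (oneForm u) α)

/-- The operator `D = δ + u ∧ ·` in degree `0` (the Chevalley–Eilenberg differential with
trivial coefficients vanishes on `Λ⁰`, by the Koszul formula). -/
def DformZero {R M : Type*} [CommRing R] [AddCommGroup M] [Module R M] (u : M →ₗ[R] R)
    (c : M [⋀^Fin 0]→ₗ[R] R) : M [⋀^Fin 1]→ₗ[R] R :=
  c ![] • oneForm u

/-- The Lie derivative `L_X = ι_X ∘ D + D ∘ ι_X` of a `1`-form `ψ`, where `D = δ + 1* ∧ ·`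
and `δ` (in degree one) is `d`. -/
def lieDer (d : ((gC g) [⋀^Fin 1]→ₗ[ℂ] ℂ) → ((gC g) [⋀^Fin 2]→ₗ[ℂ] ℂ)) (X : gC g)
    (ψ : (gC g) [⋀^Fin 1]→ₗ[ℂ] ℂ) : (gC g) [⋀^Fin 1]→ₗ[ℂ] ℂ :=
  (Dform (oneStarC g) d ψ).curryLeft X + DformZero (oneStarC g) (ψ.curryLeft X)

/-- The `Θ`-twisted Dorfman bracket
`[[(X₁,ψ₁),(X₂,ψ₂)]]_Θ = ([X₁,X₂], L_{X₁} ψ₂ − ι_{X₂} D ψ₁ + ι_{X₁} ι_{X₂} Θ)`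
on `(g_ℝ)_ℂ ⊕ ((g_ℝ)_ℂ)*` (`ℂ`-bilinear extension of the `H`-twisted Dorfman bracket,
for `Θ` the extension of `H`). -/
def dorfman (d : ((gC g) [⋀^Fin 1]→ₗ[ℂ] ℂ) → ((gC g) [⋀^Fin 2]→ₗ[ℂ] ℂ))
    (Θ : (gC g) [⋀^Fin 3]→ₗ[ℂ] ℂ) (a b : gC g × ((gC g) [⋀^Fin 1]→ₗ[ℂ] ℂ)) :
    gC g × ((gC g) [⋀^Fin 1]→ₗ[ℂ] ℂ) :=
  (⁅a.1, b.1⁆,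
    lieDer d a.1 b.2 - (Dform (oneStarC g) d a.2).curryLeft b.1 +
      (Θ.curryLeft b.1).curryLeft a.1)

/-- The (ℂ-bilinear extension of the) pairing `⟨⟨(X₁,ψ₁),(X₂,ψ₂)⟩⟩ = ψ₁(X₂) + ψ₂(X₁)`. -/
def omniPair (a b : gC g × ((gC g) [⋀^Fin 1]→ₗ[ℂ] ℂ)) : ℂ :=
  a.2 ![b.1] + b.2 ![a.1]

/-- Conjugation on `(g_ℝ)_ℂ`. -/
def conjGC (p : gC g) : gC g := (cxConj g p.1, (starRingEnd ℂ) p.2)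

theorem conjGC_add (x y : gC g) : conjGC (x + y) = conjGC x + conjGC y := by
  unfold conjGC
  ext <;> simp [Prod.fst_add, Prod.snd_add, map_add]

theorem conjGC_smul (c : ℂ) (x : gC g) : conjGC (c • x) = (starRingEnd ℂ) c • conjGC x := by
  unfold conjGC
  ext <;> simp [Prod.smul_fst, Prod.smul_snd, map_smulₛₗ]

/-- Conjugation of a `ℂ`-linear functional on `(g_ℝ)_ℂ`: `(conj f)(x) = conj (f (conj x))`. -/
def conjDual (f : Module.Dual ℂ (gC g)) : Module.Dual ℂ (gC g) where
  toFun x := (starRingEnd ℂ) (f (conjGC x))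
  map_add' x y := by rw [conjGC_add, map_add, map_add]
  map_smul' c x := by rw [conjGC_smul, map_smul, smul_eq_mul, map_mul]; simp

/-- Conjugation on `(g_ℝ)_ℂ ⊕ ((g_ℝ)_ℂ)*`. -/
def conjOmni (a : gC g × ((gC g) [⋀^Fin 1]→ₗ[ℂ] ℂ)) :
    gC g × ((gC g) [⋀^Fin 1]→ₗ[ℂ] ℂ) :=
  (conjGC a.1,
    oneForm (conjDual ((AlternatingMap.ofSubsingleton ℂ (gC g) ℂ 0).symm a.2)))

/-- A (`Θ`-twisted) generalized contact structure on `g`: a complex subspace `L` of the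
complexification of `g_ℝ ⊕ g_ℝ*` which is maximally isotropic for the pairing
(isotropic of complex dimension `dim_ℝ g_ℝ`, i.e. half of `dim_ℝ (g_ℝ ⊕ g_ℝ*)`),
satisfies `L ∩ conj L = {0}`, and is closed under the `Θ`-twisted Dorfman bracket.
Here `d` is the (degree-one) Chevalley–Eilenberg differential of `(g_ℝ)_ℂ`, and `Θ` is
the `ℂ`-bilinear extension of the twisting real `3`-form `H`. -/
def IsGenContact (d : ((gC g) [⋀^Fin 1]→ₗ[ℂ] ℂ) → ((gC g) [⋀^Fin 2]→ₗ[ℂ] ℂ))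
    (Θ : (gC g) [⋀^Fin 3]→ₗ[ℂ] ℂ)
    (L : Submodule ℂ (gC g × ((gC g) [⋀^Fin 1]→ₗ[ℂ] ℂ))) : Prop :=
  (∀ a ∈ L, ∀ b ∈ L, omniPair a b = 0) ∧
  Module.finrank ℂ ↥L = Module.finrank ℝ (g × ℝ) ∧
  (∀ a ∈ L, conjOmni a ∈ L → a = 0) ∧
  (∀ a ∈ L, ∀ b ∈ L, dorfman d Θ a b ∈ L)

/-- The transform `(X, ψ) ↦ (X, ψ + ι_X B)` of the omni-Lie algebra by a `2`-form `B`. -/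
def bTransform (B : (gC g) [⋀^Fin 2]→ₗ[ℂ] ℂ) :
    (gC g × ((gC g) [⋀^Fin 1]→ₗ[ℂ] ℂ)) →ₗ[ℂ] (gC g × ((gC g) [⋀^Fin 1]→ₗ[ℂ] ℂ)) where
  toFun a := (a.1, a.2 + B.curryLeft a.1)
  map_add' a b := by
    ext : 1
    · rfl
    · show (a.2 + b.2) + B.curryLeft (a.1 + b.1) = (a.2 + B.curryLeft a.1) + (b.2 + B.curryLeft b.1)
      rw [map_add]; abel
  map_smul' c a := by
    ext : 1
    · rfl
    · show (c • a.2) + B.curryLeft (c • a.1) = c • (a.2 + B.curryLeft a.1)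
      rw [map_smul, smul_add]

end GeneralizedContact



/-! Since `1 = (0, 1)` is central and `1*(1) = 1`, the homotopy formula `D ι₁ + ι₁ D = id`
turns `D H = 0` into `H = D (ι₁ H)`. For any `2`-form `B`, the transform `e^B` carries the
`Θ`-twisted Dorfman bracket to the `(Θ + D B)`-twisted one, preserves the pairing, and commutes
with conjugation when `B` is real; with `B = -ι₁ H` the twist disappears. Identities between
complex forms are checked on real vectors, which span the complexification. -/

section Wedge

open Equiv

variable {R M : Type*} [CommRing R] [AddCommGroup M] [Module R M] {m : ℕ}

theorem AlternatingMap.ite_mul_apply_swap_zero_succ (α : M [⋀^Fin m]→ₗ[R] R)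
    (v : Fin (m + 1) → M) (i : Fin (m + 1)) :
    (if i = 0 then 1 else -1 : R) * α (fun j => v (swap 0 i j.succ)) =
      (-1) ^ (i : ℕ) * α (i.removeNth v) := by
  induction i using Fin.cases with
  | zero => simp; rfl
  | succ k =>
    have hcycle :
        (fun j => v (swap 0 k.succ j.succ)) = k.succ.removeNth v ∘ Fin.cycleRange k := by
      funext j
      simp only [Function.comp_apply, Fin.removeNth, Fin.succAbove_cycleRange]
    rw [hcycle, α.map_perm, Fin.sign_cycleRange]
    simp [pow_succ, Units.smul_def]

theorem AlternatingMap.sign_smul_apply_decomposeFin_symm (α : M [⋀^Fin m]→ₗ[R] R)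
    (v : Fin (m + 1) → M) (i : Fin (m + 1)) (τ : Perm (Fin m)) :
    (Perm.sign (Perm.decomposeFin.symm (i, τ)) : ℤ) •
        α (fun j => v (Perm.decomposeFin.symm (i, τ) j.succ)) =
      (-1) ^ (i : ℕ) * α (i.removeNth v) := by
  have hcomp : (fun j => v (Perm.decomposeFin.symm (i, τ) j.succ)) =
      (fun j => v (swap 0 i j.succ)) ∘ τ := by
    funext j
    simp [Perm.decomposeFin_symm_apply_succ]
  rw [hcomp, α.map_perm, Perm.decomposeFin.symm_sign, ← α.ite_mul_apply_swap_zero_succ]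
  rcases Int.units_eq_one_or (Perm.sign τ) with hτ | hτ <;> split_ifs <;>
    simp [hτ, Units.smul_def]

theorem AlternatingMap.sum_perm_sign_smul_mul_apply_succ (f : M → R)
    (α : M [⋀^Fin m]→ₗ[R] R) (v : Fin (m + 1) → M) :
    ∑ π : Perm (Fin (m + 1)), (Perm.sign π : ℤ) • (f (v (π 0)) * α (fun j => v (π j.succ))) =
      m.factorial * ∑ i : Fin (m + 1), (-1) ^ (i : ℕ) * (f (v i) * α (i.removeNth v)) := by
  rw [← Equiv.sum_comp Perm.decomposeFin.symm, Fintype.sum_prod_type, Finset.mul_sum]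
  refine Finset.sum_congr rfl fun i _ => ?_
  have hterm (τ : Perm (Fin m)) :
      (Perm.sign (Perm.decomposeFin.symm (i, τ)) : ℤ) •
          (f (v (Perm.decomposeFin.symm (i, τ) 0)) *
            α (fun j => v (Perm.decomposeFin.symm (i, τ) j.succ))) =
        (-1) ^ (i : ℕ) * (f (v i) * α (i.removeNth v)) := by
    rw [Perm.decomposeFin_symm_apply_zero, ← mul_smul_comm, α.sign_smul_apply_decomposeFin_symm]
    ring
  simp only [hterm, Finset.sum_const, Finset.card_univ, Fintype.card_perm, Fintype.card_fin,
    nsmul_eq_mul]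

theorem factorial_mul_castForm_wedge_oneForm_apply (u : M →ₗ[R] R) (α : M [⋀^Fin m]→ₗ[R] R)
    (v : Fin (m + 1) → M) :
    (m.factorial : R) * castForm (Nat.add_comm 1 m) (wedge (oneForm u) α) v =
      ∑ π : Perm (Fin (m + 1)), (Perm.sign π : ℤ) • (u (v (π 0)) * α (fun j => v (π j.succ))) := by
  classical
  set e : Fin 1 ⊕ Fin m ≃ Fin (m + 1) := finSumFinEquiv.trans (finCongr (Nat.add_comm 1 m))
  have hunfold : castForm (Nat.add_comm 1 m) (wedge (oneForm u) α) v =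
      LinearMap.mul' R R ((oneForm u).domCoprod α (v ∘ e)) := rfl
  have halt := congrArg (fun F => LinearMap.mul' R R (F (v ∘ e)))
    (MultilinearMap.domCoprod_alternization_eq (oneForm u) α)
  simp only [AlternatingMap.smul_apply, Fintype.card_fin, Nat.factorial_one, one_mul, map_nsmul,
    MultilinearMap.alternatization_apply, map_sum] at halt
  rw [hunfold, ← nsmul_eq_mul, ← halt]
  refine Fintype.sum_equiv (permCongr e) _ _ fun σ => ?_
  have he (i) : permCongr e σ (e i) = e (σ i) := by simp [permCongr_apply]
  have hzero : (0 : Fin (m + 1)) = e (Sum.inl 0) := Fin.ext (by simp [e])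
  have hsucc (j : Fin m) : j.succ = e (Sum.inr j) := Fin.ext (by simp [e])
  rw [Perm.sign_permCongr, Units.smul_def, map_zsmul, hzero, he]
  simp only [hsucc, he]
  rfl

theorem castForm_wedge_oneForm_apply [IsDomain R] [CharZero R] (u : M →ₗ[R] R)
    (α : M [⋀^Fin m]→ₗ[R] R) (v : Fin (m + 1) → M) :
    castForm (Nat.add_comm 1 m) (wedge (oneForm u) α) v =
      ∑ i : Fin (m + 1), (-1) ^ (i : ℕ) * (u (v i) * α (i.removeNth v)) :=
  mul_left_cancel₀ (Nat.cast_ne_zero.2 m.factorial_ne_zero) <| by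
    rw [factorial_mul_castForm_wedge_oneForm_apply, α.sum_perm_sign_smul_mul_apply_succ]

end Wedge

section SmallDegree

variable {R M N : Type*} [CommRing R] [AddCommGroup M] [Module R M] [AddCommGroup N] [Module R N]

theorem AlternatingMap.ext_fin_one {f f' : M [⋀^Fin 1]→ₗ[R] N}
    (h : ∀ x, f ![x] = f' ![x]) : f = f' :=
  AlternatingMap.ext fun v => by
    rw [show v = ![v 0] by funext i; fin_cases i; rfl]
    exact h _

theorem AlternatingMap.ext_fin_two {f f' : M [⋀^Fin 2]→ₗ[R] N}
    (h : ∀ x y, f ![x, y] = f' ![x, y]) : f = f' :=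
  AlternatingMap.ext fun v => by
    rw [show v = ![v 0, v 1] by funext i; fin_cases i <;> rfl]
    exact h _ _

theorem AlternatingMap.map_swap_two (B : M [⋀^Fin 2]→ₗ[R] N) (x y : M) :
    B ![y, x] = -B ![x, y] := by
  rw [show ![y, x] = ![x, y] ∘ Equiv.swap 0 1 by funext i; fin_cases i <;> rfl,
    B.map_swap _ (by decide)]

theorem AlternatingMap.map_swap_three (H : M [⋀^Fin 3]→ₗ[R] N) (x y z : M) :
    H ![y, x, z] = -H ![x, y, z] := by
  rw [show ![y, x, z] = ![x, y, z] ∘ Equiv.swap 0 1 by funext i; fin_cases i <;> rfl,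
    H.map_swap _ (by decide)]

end SmallDegree

section Koszul

variable {R W : Type*} [CommRing R] [LieRing W] [LieAlgebra R W]

theorem IsCEDiff.apply_two {d : (W [⋀^Fin 1]→ₗ[R] R) → (W [⋀^Fin 2]→ₗ[R] R)}
    (hd : IsCEDiff d) (γ : W [⋀^Fin 1]→ₗ[R] R) (x y : W) : d γ ![x, y] = -γ ![⁅x, y⁆] := by
  have hpairs : Finset.univ.filter (fun p : Fin 2 × Fin 2 => p.1 < p.2) = {(0, 1)} := by decide
  have harg : kosArg ![x, y] 0 1 = ![⁅x, y⁆] := by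
    funext k
    fin_cases k
    rfl
  simp [hd γ, hpairs, harg]

theorem IsCEDiff.apply_four_of_lie_eq_zero
    {δ : (W [⋀^Fin 3]→ₗ[R] R) → (W [⋀^Fin 4]→ₗ[R] R)} (hδ : IsCEDiff δ)
    (H : W [⋀^Fin 3]→ₗ[R] R) {e : W} (he : ∀ x : W, ⁅e, x⁆ = 0) (p q r : W) :
    δ H ![e, p, q, r] = -H ![⁅p, q⁆, e, r] + H ![⁅p, r⁆, e, q] - H ![⁅q, r⁆, e, p] := by
  have hpairs : Finset.univ.filter (fun p : Fin 4 × Fin 4 => p.1 < p.2) =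
      {(0, 1), (0, 2), (0, 3), (1, 2), (1, 3), (2, 3)} := by decide
  have hcentral (j : Fin 4) : H (kosArg ![e, p, q, r] 0 j) = 0 := by
    rw [← Matrix.cons_head_tail (kosArg _ 0 j), ← AlternatingMap.curryLeft_apply_apply]
    simp [Matrix.vecHead, kosArg, he]
  have h12 : kosArg ![e, p, q, r] 1 2 = ![⁅p, q⁆, e, r] := by
    funext k; fin_cases k <;> rfl
  have h13 : kosArg ![e, p, q, r] 1 3 = ![⁅p, r⁆, e, q] := by
    funext k; fin_cases k <;> rfl
  have h23 : kosArg ![e, p, q, r] 2 3 = ![⁅q, r⁆, e, p] := by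
    funext k; fin_cases k <;> rfl
  rw [hδ, hpairs]
  simp [Finset.sum_insert, hcentral, h12, h13, h23]
  ring

/-- `(D B)(x, y, z)` for `D = δ + u ∧ ·`, written out by the Koszul formula. -/
def DformTwoApply (u : W →ₗ[R] R) (B : W [⋀^Fin 2]→ₗ[R] R) (x y z : W) : R :=
  -B ![⁅x, y⁆, z] + B ![⁅x, z⁆, y] - B ![⁅y, z⁆, x] +
    (u x * B ![y, z] - u y * B ![x, z] + u z * B ![x, y])

theorem DformTwoApply_neg (u : W →ₗ[R] R) (B : W [⋀^Fin 2]→ₗ[R] R) (x y z : W) :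
    DformTwoApply u (-B) x y z = -DformTwoApply u B x y z := by
  simp only [DformTwoApply, AlternatingMap.neg_apply]
  ring

variable [IsDomain R] [CharZero R]

theorem Dform_apply_two (u : W →ₗ[R] R) {d : (W [⋀^Fin 1]→ₗ[R] R) → (W [⋀^Fin 2]→ₗ[R] R)}
    (hd : IsCEDiff d) (γ : W [⋀^Fin 1]→ₗ[R] R) (x y : W) :
    Dform u d γ ![x, y] = -γ ![⁅x, y⁆] + (u x * γ ![y] - u y * γ ![x]) := by
  have h0 : Fin.removeNth 0 ![x, y] = ![y] := by funext j; fin_cases j; rfl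
  have h1 : Fin.removeNth 1 ![x, y] = ![x] := by funext j; fin_cases j; rfl
  simp [Dform, hd.apply_two, castForm_wedge_oneForm_apply, Fin.sum_univ_two, h0, h1]
  ring

theorem apply_eq_DformTwoApply_curryLeft {u : W →ₗ[R] R}
    {δ : (W [⋀^Fin 3]→ₗ[R] R) → (W [⋀^Fin 4]→ₗ[R] R)} (hδ : IsCEDiff δ)
    {H : W [⋀^Fin 3]→ₗ[R] R} (hH : Dform u δ H = 0) {e : W} (he : ∀ x : W, ⁅e, x⁆ = 0)
    (hue : u e = 1) (p q r : W) : H ![p, q, r] = DformTwoApply u (H.curryLeft e) p q r := by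
  have hclosed : Dform u δ H ![e, p, q, r] = 0 := by rw [hH]; rfl
  have h0 : Fin.removeNth 0 ![e, p, q, r] = ![p, q, r] := by funext j; fin_cases j <;> rfl
  have h1 : Fin.removeNth 1 ![e, p, q, r] = ![e, q, r] := by funext j; fin_cases j <;> rfl
  have h2 : Fin.removeNth 2 ![e, p, q, r] = ![e, p, r] := by funext j; fin_cases j <;> rfl
  have h3 : Fin.removeNth 3 ![e, p, q, r] = ![e, p, q] := by funext j; fin_cases j <;> rfl
  rw [Dform, AlternatingMap.add_apply, hδ.apply_four_of_lie_eq_zero H he,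
    castForm_wedge_oneForm_apply, Fin.sum_univ_four] at hclosed
  simp [h0, h1, h2, h3, DformTwoApply, H.map_swap_three _ e, hue] at hclosed ⊢
  linear_combination hclosed

end Koszul

theorem IsLinearMap.eq_zero_of_span_eq_top {R M N : Type*} [Semiring R] [AddCommMonoid M]
    [Module R M] [AddCommMonoid N] [Module R N] {s : Set M} (hs : Submodule.span R s = ⊤)
    {f : M → N} (hf : IsLinearMap R f) (h : ∀ x ∈ s, f x = 0) (x : M) : f x = 0 :=
  LinearMap.congr_fun (LinearMap.ext_on hs (f := hf.mk' f) (g := 0) h) x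

section Complexification

variable {g : Type*} [LieRing g] [LieAlgebra ℝ g]

theorem span_range_incC : Submodule.span ℂ (Set.range (incC g)) = ⊤ := by
  have hg : Submodule.span ℂ (Set.range fun x : g => (1 : ℂ) ⊗ₜ[ℝ] x) = ⊤ := by
    have h := Submodule.baseChange_top (R := ℝ) ℂ (M := g)
    rwa [Submodule.baseChange_eq_span, Submodule.map_top, LinearMap.coe_range] at h
  rw [eq_top_iff]
  rintro ⟨t, c⟩ -
  have ht : ((t, 0) : gC g) ∈ Submodule.span ℂ (Set.range (incC g)) := by
    have := Submodule.mem_map_of_mem (f := LinearMap.inl ℂ _ ℂ) (hg ▸ Submodule.mem_top (x := t))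
    rw [Submodule.map_span] at this
    refine Submodule.span_mono ?_ this
    rintro _ ⟨_, ⟨x, rfl⟩, rfl⟩
    exact ⟨(x, 0), by simp [incC]⟩
  have hc : ((0, c) : gC g) ∈ Submodule.span ℂ (Set.range (incC g)) := by
    have : ((0, c) : gC g) = c • incC g (0, 1) := by ext <;> simp [incC]
    exact this ▸ Submodule.smul_mem _ c (Submodule.subset_span ⟨_, rfl⟩)
  simpa using add_mem ht hc

theorem eq_zero_of_incC₂ {F : gC g → gC g → ℂ} (h₁ : ∀ y, IsLinearMap ℂ (F · y))
    (h₂ : ∀ x, IsLinearMap ℂ (F x)) (h : ∀ p q, F (incC g p) (incC g q) = 0) (x y : gC g) :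
    F x y = 0 := by
  have hreal (p : g × ℝ) (y : gC g) : F (incC g p) y = 0 :=
    (h₂ _).eq_zero_of_span_eq_top span_range_incC (by rintro _ ⟨q, rfl⟩; exact h p q) y
  exact (h₁ y).eq_zero_of_span_eq_top span_range_incC (by rintro _ ⟨p, rfl⟩; exact hreal p y) x

theorem eq_zero_of_incC₃ {F : gC g → gC g → gC g → ℂ} (h₁ : ∀ y z, IsLinearMap ℂ (F · y z))
    (h₂ : ∀ x z, IsLinearMap ℂ (F x · z)) (h₃ : ∀ x y, IsLinearMap ℂ (F x y))
    (h : ∀ p q r, F (incC g p) (incC g q) (incC g r) = 0) (x y z : gC g) : F x y z = 0 := by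
  have hreal (p : g × ℝ) (y z : gC g) : F (incC g p) y z = 0 :=
    eq_zero_of_incC₂ (h₂ _) (h₃ _) (h p) y z
  exact (h₁ y z).eq_zero_of_span_eq_top span_range_incC
    (by rintro _ ⟨p, rfl⟩; exact hreal p y z) x

theorem incC_lie (p q : g × ℝ) : ⁅incC g p, incC g q⁆ = incC g ⁅p, q⁆ := by
  ext
  · exact (LieAlgebra.ExtendScalars.bracket_tmul ..).trans (by rw [mul_one]; rfl)
  · exact Complex.ofReal_zero.symm

theorem oneStarC_incC (p : g × ℝ) : oneStarC g (incC g p) = oneStarR g p := rfl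

theorem conjGC_incC (p : g × ℝ) : conjGC (incC g p) = incC g p := by
  ext <;> simp [conjGC, incC, cxConj]

theorem conjGC_conjGC (x : gC g) : conjGC (conjGC x) = x := by
  ext
  · change (LinearMap.rTensor g Complex.conjAe.toLinearMap ∘ₗ
      LinearMap.rTensor g Complex.conjAe.toLinearMap) x.1 = x.1
    rw [← LinearMap.rTensor_comp, show Complex.conjAe.toLinearMap ∘ₗ Complex.conjAe.toLinearMap =
      LinearMap.id by ext; simp, LinearMap.rTensor_id, LinearMap.id_apply]
  · simp [conjGC]

def IsComplexExtension {n : ℕ}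
    (ext : ((g × ℝ) [⋀^Fin n]→ₗ[ℝ] ℝ) → ((gC g) [⋀^Fin n]→ₗ[ℂ] ℂ)) : Prop :=
  ∀ (α : (g × ℝ) [⋀^Fin n]→ₗ[ℝ] ℝ) (v : Fin n → g × ℝ),
    ext α (fun i => incC g (v i)) = ((α v : ℝ) : ℂ)

section Degree2

variable {ext2 : ((g × ℝ) [⋀^Fin 2]→ₗ[ℝ] ℝ) → ((gC g) [⋀^Fin 2]→ₗ[ℂ] ℂ)}

theorem ext2_apply_incC (hext2 : IsComplexExtension ext2) (α : (g × ℝ) [⋀^Fin 2]→ₗ[ℝ] ℝ)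
    (p q : g × ℝ) : ext2 α ![incC g p, incC g q] = α ![p, q] := by
  rw [← hext2 α ![p, q]]
  congr 1
  funext i; fin_cases i <;> rfl

theorem ext2_neg (hext2 : IsComplexExtension ext2) (α : (g × ℝ) [⋀^Fin 2]→ₗ[ℝ] ℝ) :
    ext2 (-α) = -ext2 α := by
  refine AlternatingMap.ext_fin_two fun x y => eq_neg_iff_add_eq_zero.2 ?_
  refine eq_zero_of_incC₂ (F := fun x y => ext2 (-α) ![x, y] + ext2 α ![x, y])
    (fun y => ⟨fun _ _ => ?_, fun _ _ => ?_⟩) (fun x => ⟨fun _ _ => ?_, fun _ _ => ?_⟩)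
    (fun p q => by simp [ext2_apply_incC hext2]) x y
  all_goals
    simp only [← AlternatingMap.curryLeft_apply_apply, map_add, map_smul,
      AlternatingMap.add_apply, AlternatingMap.smul_apply, smul_eq_mul]
    ring

theorem ext2_apply_conjGC (hext2 : IsComplexExtension ext2) (α : (g × ℝ) [⋀^Fin 2]→ₗ[ℝ] ℝ)
    (x y : gC g) : ext2 α ![conjGC x, conjGC y] = starRingEnd ℂ (ext2 α ![x, y]) := by
  rw [← sub_eq_zero.1 <| eq_zero_of_incC₂
    (F := fun x y => starRingEnd ℂ (ext2 α ![conjGC x, conjGC y]) - ext2 α ![x, y])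
    (fun y => ⟨fun _ _ => ?_, fun _ _ => ?_⟩) (fun x => ⟨fun _ _ => ?_, fun _ _ => ?_⟩)
    (fun p q => by simp [conjGC_incC, ext2_apply_incC hext2]) x y, Complex.conj_conj]
  all_goals
    simp only [← AlternatingMap.curryLeft_apply_apply, conjGC_add, conjGC_smul, map_add,
      map_smul, AlternatingMap.add_apply, AlternatingMap.smul_apply, smul_eq_mul, map_mul,
      Complex.conj_conj]
    ring

theorem DformTwoApply_incC (hext2 : IsComplexExtension ext2) (β : (g × ℝ) [⋀^Fin 2]→ₗ[ℝ] ℝ)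
    (p q r : g × ℝ) :
    DformTwoApply (oneStarC g) (ext2 β) (incC g p) (incC g q) (incC g r) =
      DformTwoApply (oneStarR g) β p q r := by
  simp only [DformTwoApply, incC_lie, ext2_apply_incC hext2, oneStarC_incC]
  push_cast
  ring

end Degree2

theorem ext3_apply_incC {ext3 : ((g × ℝ) [⋀^Fin 3]→ₗ[ℝ] ℝ) → ((gC g) [⋀^Fin 3]→ₗ[ℂ] ℂ)}
    (hext3 : IsComplexExtension ext3) (α : (g × ℝ) [⋀^Fin 3]→ₗ[ℝ] ℝ) (p q r : g × ℝ) :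
    ext3 α ![incC g p, incC g q, incC g r] = α ![p, q, r] := by
  rw [← hext3 α ![p, q, r]]
  congr 1
  funext i; fin_cases i <;> rfl

theorem ext3_apply_eq_DformTwoApply
    {ext2 : ((g × ℝ) [⋀^Fin 2]→ₗ[ℝ] ℝ) → ((gC g) [⋀^Fin 2]→ₗ[ℂ] ℂ)}
    (hext2 : IsComplexExtension ext2)
    {ext3 : ((g × ℝ) [⋀^Fin 3]→ₗ[ℝ] ℝ) → ((gC g) [⋀^Fin 3]→ₗ[ℂ] ℂ)}
    (hext3 : IsComplexExtension ext3)
    {δ : ((g × ℝ) [⋀^Fin 3]→ₗ[ℝ] ℝ) → ((g × ℝ) [⋀^Fin 4]→ₗ[ℝ] ℝ)} (hδ : IsCEDiff δ)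
    {H : (g × ℝ) [⋀^Fin 3]→ₗ[ℝ] ℝ} (hH : Dform (oneStarR g) δ H = 0) (x y z : gC g) :
    ext3 H ![x, y, z] =
      DformTwoApply (oneStarC g) (ext2 (H.curryLeft ((0, 1) : g × ℝ))) x y z := by
  have hreal (p q r : g × ℝ) :
      H ![p, q, r] = DformTwoApply (oneStarR g) (H.curryLeft ((0, 1) : g × ℝ)) p q r :=
    apply_eq_DformTwoApply_curryLeft hδ hH (fun x => Prod.ext (zero_lie x.1) rfl) rfl p q r
  refine sub_eq_zero.1 <| eq_zero_of_incC₃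
    (F := fun x y z => ext3 H ![x, y, z] -
      DformTwoApply (oneStarC g) (ext2 (H.curryLeft ((0, 1) : g × ℝ))) x y z)
    (fun y z => ⟨fun _ _ => ?_, fun _ _ => ?_⟩) (fun x z => ⟨fun _ _ => ?_, fun _ _ => ?_⟩)
    (fun x y => ⟨fun _ _ => ?_, fun _ _ => ?_⟩)
    (fun p q r => by simp [ext3_apply_incC hext3, DformTwoApply_incC hext2, hreal]) x y z
  all_goals
    simp only [DformTwoApply, ← AlternatingMap.curryLeft_apply_apply, map_add, map_smul,
      add_lie, lie_add, smul_lie, lie_smul, AlternatingMap.add_apply, AlternatingMap.smul_apply,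
      smul_eq_mul]
    ring

end Complexification

section BTransform

variable {g : Type*} [LieRing g] [LieAlgebra ℝ g]

theorem bTransform_apply (B : (gC g) [⋀^Fin 2]→ₗ[ℂ] ℂ)
    (a : gC g × ((gC g) [⋀^Fin 1]→ₗ[ℂ] ℂ)) :
    bTransform B a = (a.1, a.2 + B.curryLeft a.1) := rfl

theorem bTransform_bTransform (B B' : (gC g) [⋀^Fin 2]→ₗ[ℂ] ℂ)
    (a : gC g × ((gC g) [⋀^Fin 1]→ₗ[ℂ] ℂ)) :
    bTransform B (bTransform B' a) = bTransform (B' + B) a := by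
  simp [bTransform_apply, add_assoc]

theorem bTransform_zero (a : gC g × ((gC g) [⋀^Fin 1]→ₗ[ℂ] ℂ)) : bTransform 0 a = a := by
  simp [bTransform_apply]

theorem bTransform_injective (B : (gC g) [⋀^Fin 2]→ₗ[ℂ] ℂ) :
    Function.Injective (bTransform B) :=
  Function.LeftInverse.injective (g := bTransform (-B)) fun a => by
    rw [bTransform_bTransform, add_neg_cancel, bTransform_zero]

theorem omniPair_bTransform (B : (gC g) [⋀^Fin 2]→ₗ[ℂ] ℂ)
    (a b : gC g × ((gC g) [⋀^Fin 1]→ₗ[ℂ] ℂ)) :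
    omniPair (bTransform B a) (bTransform B b) = omniPair a b := by
  simp only [omniPair, bTransform_apply, AlternatingMap.add_apply,
    AlternatingMap.curryLeft_apply_apply, B.map_swap_two b.1]
  ring

theorem conjOmni_apply_snd (a : gC g × ((gC g) [⋀^Fin 1]→ₗ[ℂ] ℂ)) (z : gC g) :
    (conjOmni a).2 ![z] = starRingEnd ℂ (a.2 ![conjGC z]) := by
  show starRingEnd ℂ (a.2 fun _ => conjGC z) = _
  congr 2
  funext i; fin_cases i; rfl

theorem conjOmni_bTransform {B : (gC g) [⋀^Fin 2]→ₗ[ℂ] ℂ}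
    (hB : ∀ x y, B ![conjGC x, conjGC y] = starRingEnd ℂ (B ![x, y]))
    (a : gC g × ((gC g) [⋀^Fin 1]→ₗ[ℂ] ℂ)) :
    conjOmni (bTransform B a) = bTransform B (conjOmni a) := by
  refine Prod.ext rfl (AlternatingMap.ext_fin_one fun z => ?_)
  have h := hB a.1 (conjGC z)
  rw [conjGC_conjGC] at h
  simp [conjOmni_apply_snd, bTransform_apply, ← h]
  rfl

variable {d : ((gC g) [⋀^Fin 1]→ₗ[ℂ] ℂ) → ((gC g) [⋀^Fin 2]→ₗ[ℂ] ℂ)}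

theorem lieDer_apply (hd : IsCEDiff d) (X : gC g) (γ : (gC g) [⋀^Fin 1]→ₗ[ℂ] ℂ) (z : gC g) :
    lieDer d X γ ![z] = -γ ![⁅X, z⁆] + oneStarC g X * γ ![z] := by
  have hzero : DformZero (oneStarC g) (γ.curryLeft X) ![z] = γ ![X] * oneStarC g z := rfl
  rw [lieDer, AlternatingMap.add_apply, hzero, AlternatingMap.curryLeft_apply_apply,
    Dform_apply_two _ hd]
  ring

theorem dorfman_apply_snd (hd : IsCEDiff d) (Θ : (gC g) [⋀^Fin 3]→ₗ[ℂ] ℂ)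
    (a b : gC g × ((gC g) [⋀^Fin 1]→ₗ[ℂ] ℂ)) (z : gC g) :
    (dorfman d Θ a b).2 ![z] =
      -b.2 ![⁅a.1, z⁆] + oneStarC g a.1 * b.2 ![z] -
        (-a.2 ![⁅b.1, z⁆] + (oneStarC g b.1 * a.2 ![z] - oneStarC g z * a.2 ![b.1])) +
        Θ ![b.1, a.1, z] := by
  simp only [dorfman, AlternatingMap.add_apply, AlternatingMap.sub_apply, lieDer_apply hd,
    AlternatingMap.curryLeft_apply_apply]
  rw [Dform_apply_two _ hd]

theorem dorfman_bTransform (hd : IsCEDiff d) {Θ Θ' : (gC g) [⋀^Fin 3]→ₗ[ℂ] ℂ}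
    {B : (gC g) [⋀^Fin 2]→ₗ[ℂ] ℂ}
    (hΘ : ∀ x y z, Θ' ![x, y, z] = Θ ![x, y, z] + DformTwoApply (oneStarC g) B x y z)
    (a b : gC g × ((gC g) [⋀^Fin 1]→ₗ[ℂ] ℂ)) :
    dorfman d Θ' (bTransform B a) (bTransform B b) = bTransform B (dorfman d Θ a b) := by
  refine Prod.ext rfl (AlternatingMap.ext_fin_one fun z => ?_)
  simp only [dorfman_apply_snd hd, bTransform_apply, AlternatingMap.add_apply,
    AlternatingMap.curryLeft_apply_apply, hΘ, DformTwoApply]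
  have hfst : (dorfman d Θ a b).1 = ⁅a.1, b.1⁆ := rfl
  have hskew : B ![⁅b.1, a.1⁆, z] = -B ![⁅a.1, b.1⁆, z] := by
    rw [← lie_skew b.1 a.1, ← AlternatingMap.curryLeft_apply_apply, map_neg,
      AlternatingMap.neg_apply, AlternatingMap.curryLeft_apply_apply]
  rw [hfst, hskew, B.map_swap_two ⁅b.1, z⁆, B.map_swap_two ⁅a.1, z⁆, B.map_swap_two b.1 a.1]
  ring

theorem IsGenContact.map_bTransform (hd : IsCEDiff d) {Θ Θ' : (gC g) [⋀^Fin 3]→ₗ[ℂ] ℂ}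
    {B : (gC g) [⋀^Fin 2]→ₗ[ℂ] ℂ}
    (hB : ∀ x y, B ![conjGC x, conjGC y] = starRingEnd ℂ (B ![x, y]))
    (hΘ : ∀ x y z, Θ' ![x, y, z] = Θ ![x, y, z] + DformTwoApply (oneStarC g) B x y z)
    {L : Submodule ℂ (gC g × ((gC g) [⋀^Fin 1]→ₗ[ℂ] ℂ))} (hL : IsGenContact d Θ L) :
    IsGenContact d Θ' (L.map (bTransform B)) := by
  obtain ⟨hiso, hrank, hconj, hclosed⟩ := hL
  refine ⟨?_, ?_, ?_, ?_⟩
  · rintro _ ⟨a, ha, rfl⟩ _ ⟨b, hb, rfl⟩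
    rw [omniPair_bTransform]
    exact hiso a ha b hb
  · exact (Submodule.equivMapOfInjective _ (bTransform_injective B) L).finrank_eq.symm.trans hrank
  · rintro _ ⟨a, ha, rfl⟩ ⟨c, hc, hca⟩
    rw [conjOmni_bTransform hB] at hca
    rw [hconj a ha (bTransform_injective B hca ▸ hc), map_zero]
  · rintro _ ⟨a, ha, rfl⟩ _ ⟨b, hb, rfl⟩
    rw [dorfman_bTransform hd hΘ]
    exact Submodule.mem_map_of_mem (hclosed a ha b hb)

end BTransform

theorem untwisting_of_generalized_contact_general
    (g : Type*) [LieRing g] [LieAlgebra ℝ g]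
    (d : ((gC g) [⋀^Fin 1]→ₗ[ℂ] ℂ) → ((gC g) [⋀^Fin 2]→ₗ[ℂ] ℂ)) (hd : IsCEDiff d)
    (δ3 : ((g × ℝ) [⋀^Fin 3]→ₗ[ℝ] ℝ) → ((g × ℝ) [⋀^Fin 4]→ₗ[ℝ] ℝ)) (hδ3 : IsCEDiff δ3)
    (ext2 : ((g × ℝ) [⋀^Fin 2]→ₗ[ℝ] ℝ) → ((gC g) [⋀^Fin 2]→ₗ[ℂ] ℂ))
    (hext2 : ∀ (α : (g × ℝ) [⋀^Fin 2]→ₗ[ℝ] ℝ) (v : Fin 2 → g × ℝ),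
      ext2 α (fun i => incC g (v i)) = ((α v : ℝ) : ℂ))
    (ext3 : ((g × ℝ) [⋀^Fin 3]→ₗ[ℝ] ℝ) → ((gC g) [⋀^Fin 3]→ₗ[ℂ] ℂ))
    (hext3 : ∀ (α : (g × ℝ) [⋀^Fin 3]→ₗ[ℝ] ℝ) (v : Fin 3 → g × ℝ),
      ext3 α (fun i => incC g (v i)) = ((α v : ℝ) : ℂ))
    (H : (g × ℝ) [⋀^Fin 3]→ₗ[ℝ] ℝ) (hH : Dform (oneStarR g) δ3 H = 0)
    (L : Submodule ℂ (gC g × ((gC g) [⋀^Fin 1]→ₗ[ℂ] ℂ)))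
    (hL : IsGenContact d (ext3 H) L) :
    IsGenContact d 0
      (L.map (bTransform (ext2 (-(H.curryLeft ((0, 1) : g × ℝ)))))) ∧
    ∃ (B : (g × ℝ) [⋀^Fin 2]→ₗ[ℝ] ℝ)
      (L₀ : Submodule ℂ (gC g × ((gC g) [⋀^Fin 1]→ₗ[ℂ] ℂ))),
      IsGenContact d 0 L₀ ∧ L = L₀.map (bTransform (ext2 B)) := by
  set β := H.curryLeft ((0, 1) : g × ℝ)
  have huntwisted : IsGenContact d 0 (L.map (bTransform (ext2 (-β)))) := by
    refine hL.map_bTransform hd (ext2_apply_conjGC hext2 _) fun x y z => ?_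
    rw [ext2_neg hext2, DformTwoApply_neg, ← ext3_apply_eq_DformTwoApply hext2 hext3 hδ3 hH]
    simp
  refine ⟨huntwisted, β, _, huntwisted, ?_⟩
  have hinverse : bTransform (ext2 β) ∘ₗ bTransform (ext2 (-β)) = LinearMap.id :=
    LinearMap.ext fun a => by
      rw [LinearMap.comp_apply, bTransform_bTransform, ext2_neg hext2, neg_add_cancel,
        bTransform_zero, LinearMap.id_apply]
  rw [← Submodule.map_comp, hinverse, Submodule.map_id]

/-- Let `g` be a finite-dimensional real Lie algebra, `H ∈ Λ³g_ℝ*` a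
real `D`-closed 3-form, and `L` an `H`-generalized contact structure on `g`.  Then
`L^{−ι₁H} := {(X, ψ − ι_X ι_1 H) : (X,ψ) ∈ L}` is an (untwisted) generalized contact
structure on `g`.  In particular, every `H`-generalized contact structure on `g` is a
2-form transform of an untwisted generalized contact structure.  (Here `1 = (0,1) ∈ g_ℝ`,
`d` is the degree-one Chevalley–Eilenberg differential of `(g_ℝ)_ℂ`, `δ2, δ3` are the
degree 2 and 3 parts of the Chevalley–Eilenberg differential of `g_ℝ`, and `ext2, ext3`
are the `ℂ`-bilinear extension operators from real forms on `g_ℝ` to complex forms on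
`(g_ℝ)_ℂ`.) -/
theorem untwisting_of_generalized_contact
    (g : Type*) [LieRing g] [LieAlgebra ℝ g] [Module.Finite ℝ g]
    (d : ((gC g) [⋀^Fin 1]→ₗ[ℂ] ℂ) → ((gC g) [⋀^Fin 2]→ₗ[ℂ] ℂ)) (hd : IsCEDiff d)
    (δ2 : ((g × ℝ) [⋀^Fin 2]→ₗ[ℝ] ℝ) → ((g × ℝ) [⋀^Fin 3]→ₗ[ℝ] ℝ)) (hδ2 : IsCEDiff δ2)
    (δ3 : ((g × ℝ) [⋀^Fin 3]→ₗ[ℝ] ℝ) → ((g × ℝ) [⋀^Fin 4]→ₗ[ℝ] ℝ)) (hδ3 : IsCEDiff δ3)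
    (ext2 : ((g × ℝ) [⋀^Fin 2]→ₗ[ℝ] ℝ) → ((gC g) [⋀^Fin 2]→ₗ[ℂ] ℂ))
    (hext2 : ∀ (α : (g × ℝ) [⋀^Fin 2]→ₗ[ℝ] ℝ) (v : Fin 2 → g × ℝ),
      ext2 α (fun i => incC g (v i)) = ((α v : ℝ) : ℂ))
    (ext3 : ((g × ℝ) [⋀^Fin 3]→ₗ[ℝ] ℝ) → ((gC g) [⋀^Fin 3]→ₗ[ℂ] ℂ))
    (hext3 : ∀ (α : (g × ℝ) [⋀^Fin 3]→ₗ[ℝ] ℝ) (v : Fin 3 → g × ℝ),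
      ext3 α (fun i => incC g (v i)) = ((α v : ℝ) : ℂ))
    (H : (g × ℝ) [⋀^Fin 3]→ₗ[ℝ] ℝ) (hH : Dform (oneStarR g) δ3 H = 0)
    (L : Submodule ℂ (gC g × ((gC g) [⋀^Fin 1]→ₗ[ℂ] ℂ)))
    (hL : IsGenContact d (ext3 H) L) :
    IsGenContact d 0
      (L.map (bTransform (ext2 (-(H.curryLeft ((0, 1) : g × ℝ)))))) ∧
    ∃ (B : (g × ℝ) [⋀^Fin 2]→ₗ[ℝ] ℝ)
      (L₀ : Submodule ℂ (gC g × ((gC g) [⋀^Fin 1]→ₗ[ℂ] ℂ))),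
      IsGenContact d 0 L₀ ∧ L = L₀.map (bTransform (ext2 B)) :=
  untwisting_of_generalized_contact_general g d hd δ3 hδ3 ext2 hext2 ext3 hext3 H hH L hL
end
end
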